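/- arXiv:2507.08377 — 7 statements merged into one kernel-verified Lean document; each statement's English description precedes it below -/
import Mathlib

section
/- Let f : A → B be a one-to-one continuous map between sequential topological spaces, and suppose B is T2 (Hausdorff). Then f is a closed embedding (i.e., f is an embedding with closed image) if and only if for every sequence (x_n) in A, whenever the sequence (f(x_n)) converges in B, the sequence (x_n) converges in A. -/
open Filter Topology

/-- A continuous injection between sequential spaces with Hausdorff codomain is a closed
embedding iff convergence of image sequences forces convergence of the original sequences. -/
theorem stmt0 {A B : Type*} [TopologicalSpace A] [TopologicalSpace B]
    [SequentialSpace A] [SequentialSpace B] [T2Space B]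
    (f : A → B) (hf : Continuous f) (hinj : Function.Injective f) :
    IsClosedEmbedding f ↔
      ∀ x : ℕ → A, (∃ b, Tendsto (fun n => f (x n)) atTop (𝓝 b)) →
        ∃ a, Tendsto x atTop (𝓝 a) := by
  constructor
  · rintro h x ⟨b, hb⟩
    have hbmem : b ∈ Set.range f := by
      have := h.isClosed_range.closure_subset
      exact this (mem_closure_of_tendsto hb (Eventually.of_forall fun n => ⟨x n, rfl⟩))
    obtain ⟨a, rfl⟩ := hbmem
    exact ⟨a, h.isInducing.tendsto_nhds_iff.mpr hb⟩
  · intro h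
    have hcm : IsClosedMap f := by
      intro C hC
      rw [← isSeqClosed_iff_isClosed] at hC ⊢
      intro y b hy hb
      choose x hx hfx using hy
      obtain ⟨a, ha⟩ : ∃ a, Tendsto x atTop (𝓝 a) := by
        refine h x ⟨b, ?_⟩
        simpa [funext_iff.mpr hfx] using hb
      have hfa : Tendsto (fun n => f (x n)) atTop (𝓝 (f a)) :=
        (hf.tendsto a).comp ha
      have : f a = b := tendsto_nhds_unique (by simpa [funext_iff.mpr hfx] using hfa) hb
      exact ⟨a, hC hx ha, this⟩
    exact IsClosedEmbedding.of_continuous_injective_isClosedMap hf hinj hcm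
end

section
/- Consider a commutative square of topological spaces with p : X → Z, f : X → Y, q : Y → W, and f̄ : Z → W satisfying f̄ ∘ p = q ∘ f. If f is a closed embedding, f̄ is injective, p is surjective, q is a quotient map, and q⁻¹(f̄(Z)) ⊆ f(X), then f̄ is a closed embedding. -/
open Filter Topology

/-- In a commutative square with `f` a closed embedding, `f̄` injective, `p` surjective and `q`
a quotient map with `q⁻¹(f̄(Z)) ⊆ f(X)`, the map `f̄` is a closed embedding. -/
theorem stmt1 {X Y Z W : Type*} [TopologicalSpace X] [TopologicalSpace Y]
    [TopologicalSpace Z] [TopologicalSpace W]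
    (p : X → Z) (f : X → Y) (q : Y → W) (fbar : Z → W)
    (hp : Continuous p) (hfbar : Continuous fbar)
    (hcomm : fbar ∘ p = q ∘ f)
    (hf : IsClosedEmbedding f) (hinj : Function.Injective fbar)
    (hpsurj : Function.Surjective p) (hq : IsQuotientMap q)
    (hsat : q ⁻¹' (Set.range fbar) ⊆ Set.range f) :
    IsClosedEmbedding fbar := by
  refine IsClosedEmbedding.of_continuous_injective_isClosedMap hfbar hinj ?_
  intro C hC
  rw [← hq.isClosed_preimage]
  have key : q ⁻¹' (fbar '' C) = f '' (p ⁻¹' C) := by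
    ext y
    constructor
    · rintro ⟨z, hz, hzy⟩
      obtain ⟨x, hx⟩ := hsat ⟨z, hzy⟩
      refine ⟨x, ?_, hx⟩
      have : fbar (p x) = fbar z := by
        rw [show fbar (p x) = q (f x) from congrFun hcomm x, hx, hzy]
      rwa [Set.mem_preimage, hinj this]
    · rintro ⟨x, hx, rfl⟩
      exact ⟨p x, hx, congrFun hcomm x⟩
  rw [key]
  exact hf.isClosedMap _ (hC.preimage hp)
end

section
/- Consider a commutative square of topological spaces with p : X → Z, f : X → Y, q : Y → W, f̄ : Z → W, with f̄ ∘ p = q ∘ f. If f is a closed embedding, f̄ is injective, p is surjective, q is a closed map, and q⁻¹(f̄(Z)) ⊆ f(X), then f̄ is a closed embedding. -/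
open Filter Topology

theorem stmt2_general {X Y Z W : Type*} [TopologicalSpace X] [TopologicalSpace Y]
    [TopologicalSpace Z] [TopologicalSpace W]
    (p : X → Z) (f : X → Y) (q : Y → W) (fbar : Z → W)
    (hp : Continuous p) (hfbar : Continuous fbar)
    (hcomm : fbar ∘ p = q ∘ f)
    (hf : IsClosedEmbedding f) (hinj : Function.Injective fbar)
    (hpsurj : Function.Surjective p) (hq : IsClosedMap q) :
    IsClosedEmbedding fbar :=
  .of_continuous_injective_isClosedMap hfbar hinj <|
    .of_comp_surjective hpsurj hp (hcomm ▸ hq.comp hf.isClosedMap)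

/-- In a commutative square with `f` a closed embedding, `f̄` injective, `p` surjective and `q`
a closed map with `q⁻¹(f̄(Z)) ⊆ f(X)`, the map `f̄` is a closed embedding. -/
theorem stmt2 {X Y Z W : Type*} [TopologicalSpace X] [TopologicalSpace Y]
    [TopologicalSpace Z] [TopologicalSpace W]
    (p : X → Z) (f : X → Y) (q : Y → W) (fbar : Z → W)
    (hp : Continuous p) (hfbar : Continuous fbar) (hqc : Continuous q)
    (hcomm : fbar ∘ p = q ∘ f)
    (hf : IsClosedEmbedding f) (hinj : Function.Injective fbar)
    (hpsurj : Function.Surjective p) (hq : IsClosedMap q)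
    (hsat : q ⁻¹' (Set.range fbar) ⊆ Set.range f) :
    IsClosedEmbedding fbar :=
  stmt2_general p f q fbar hp hfbar hcomm hf hinj hpsurj hq
end

section
/- Let f : X → Y be a closed embedding of topological spaces. Let R be an equivalence relation on X and S an equivalence relation on Y such that x₁ R x₂ if and only if f(x₁) S f(x₂). Equip X/R and Y/S with the quotient topologies, and let f̄ : X/R → Y/S be the induced map. If the preimage under the quotient map q : Y → Y/S of the image of f̄ is contained in f(X), then f̄ is a closed embedding. -/
open Filter Topology

/-- A closed embedding compatible with equivalence relations on source and target induces a
closed embedding of the quotient spaces, under the saturation hypothesis. -/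
theorem stmt3 {X Y : Type*} [TopologicalSpace X] [TopologicalSpace Y]
    (f : X → Y) (hf : IsClosedEmbedding f)
    (R : Setoid X) (S : Setoid Y)
    (hRS : ∀ x₁ x₂ : X, R.r x₁ x₂ ↔ S.r (f x₁) (f x₂))
    (hsat : (Quotient.mk S) ⁻¹'
        (Set.range (Quotient.map' f (fun a b hab => (hRS a b).1 hab) :
          Quotient R → Quotient S)) ⊆ Set.range f) :
    IsClosedEmbedding
      (Quotient.map' f (fun a b hab => (hRS a b).1 hab) : Quotient R → Quotient S) := by
  set g : Quotient R → Quotient S := Quotient.map' f (fun a b hab => (hRS a b).1 hab) with hg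
  have hcont : Continuous g := by
    apply continuous_quot_lift
    exact (continuous_quotient_mk'.comp hf.continuous)
  have hinj : Function.Injective g := by
    intro a b hab
    induction a using Quotient.inductionOn' with
    | h x =>
      induction b using Quotient.inductionOn' with
      | h y =>
        apply Quotient.sound'
        exact (hRS x y).2 (Quotient.exact' hab)
  have hclosed : IsClosedMap g := by
    intro C hC
    rw [← isQuotientMap_quotient_mk'.isClosed_preimage]
    have key : Quotient.mk S ⁻¹' (g '' C) = f '' (Quotient.mk R ⁻¹' C) := by
      ext y
      constructor
      · rintro ⟨c, hcC, hgc⟩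
        have hy : y ∈ Set.range f := hsat ⟨c, hgc⟩
        obtain ⟨x', rfl⟩ := hy
        induction c using Quotient.inductionOn' with
        | h x =>
          have hs : S (f x) (f x') := Quotient.exact' hgc
          have hr : R x x' := (hRS x x').2 hs
          refine ⟨x', ?_, rfl⟩
          show Quotient.mk R x' ∈ C
          have : (Quotient.mk R x' : Quotient R) = Quotient.mk'' x := Quotient.sound' (R.symm hr)
          rwa [this]
      · rintro ⟨x, hxC, rfl⟩
        exact ⟨Quotient.mk'' x, hxC, rfl⟩
    show IsClosed (Quotient.mk S ⁻¹' (g '' C))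
    rw [key]
    exact hf.isClosedMap _ (hC.preimage continuous_quotient_mk')
  exact IsClosedEmbedding.of_continuous_injective_isClosedMap hcont hinj hclosed
end

section
/- Let f : X → Y be a closed embedding, S an equivalence relation on Y, and q : Y → Y/S the quotient map onto Y/S with the quotient topology. Suppose given a topological space Z and continuous maps p : X → Z and f̄ : Z → Y/S with f̄ ∘ p = q ∘ f, such that p is surjective, f̄ is a continuous bijection, and q⁻¹(f̄(Z)) ⊆ f(X). Then f̄ is a homeomorphism. -/
open Filter Topology

/-- Given a closed embedding `f : X → Y`, an equivalence relation `S` on `Y` with quotient map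
`q`, a surjective continuous `p : X → Z` and a continuous bijection `f̄ : Z → Y/S` with
`f̄ ∘ p = q ∘ f` and `q⁻¹(f̄(Z)) ⊆ f(X)`, the map `f̄` is a homeomorphism. -/
theorem stmt4 {X Y Z : Type*} [TopologicalSpace X] [TopologicalSpace Y] [TopologicalSpace Z]
    (f : X → Y) (hf : IsClosedEmbedding f) (S : Setoid Y)
    (p : X → Z) (hp : Continuous p) (hpsurj : Function.Surjective p)
    (fbar : Z → Quotient S) (hfbar : Continuous fbar) (hbij : Function.Bijective fbar)
    (hcomm : fbar ∘ p = Quotient.mk S ∘ f)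
    (hsat : (Quotient.mk S) ⁻¹' (Set.range fbar) ⊆ Set.range f) :
    IsHomeomorph fbar := by
  have hclosed : IsClosedMap fbar := by
    intro C hC
    rw [← isQuotientMap_quotient_mk'.isClosed_preimage]
    show IsClosed (Quotient.mk S ⁻¹' (fbar '' C))
    have key : Quotient.mk S ⁻¹' (fbar '' C) = f '' (p ⁻¹' C) := by
      ext y
      constructor
      · rintro ⟨c, hc, hqc⟩
        obtain ⟨x, hx⟩ := hsat (show Quotient.mk S y ∈ Set.range fbar from ⟨c, hqc⟩)
        refine ⟨x, ?_, hx⟩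
        have h2 : fbar (p x) = fbar c := by
          have h1 := congrFun hcomm x
          simp only [Function.comp_apply] at h1
          rw [h1, hx, hqc]
        show p x ∈ C
        rwa [hbij.injective h2]
      · rintro ⟨x, hx, rfl⟩
        have h1 := congrFun hcomm x
        simp only [Function.comp_apply] at h1
        exact ⟨p x, hx, h1⟩
    rw [key]
    exact hf.isClosedMap _ (hC.preimage hp)
  exact isHomeomorph_iff_continuous_isClosedMap_bijective.mpr ⟨hfbar, hclosed, hbij⟩
end

section
/- Let A be an open subset of a Δ-generated space B, equipped with the subspace topology. Then A is Δ-generated, and the inclusion A ⊆ B is a Δ-inclusion: for every Δ-generated space Z, a set map g : Z → A is continuous if and only if the composite Z → A → B is continuous. -/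
/-!
A path `p : [0,1] → B` only meets an open `A ⊆ B` on an open set of parameters, so it is not a
path in `A`. But around any parameter `x` with `p x ∈ A`, clamping `[0,1]` onto a small interval
`[b, c] ∋ x` produces a genuine path in `A` that agrees with `p` near `x`. Hence a Δ-open subset
of `A` pulls back along every path of `B` to an open set: it is Δ-open, hence open, in `B`.
The Δ-inclusion property is just the universal property of the subspace topology.
-/

open Filter Topology TopologicalSpace

universe u

/-- The Δ-kelleyfication of a topology `t` on `M`: the final topology with respect to all
maps `[0,1] → M` that are continuous for `t`. -/
def deltaK (M : Type*) (t : TopologicalSpace M) : TopologicalSpace M :=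
  ⨆ f : {g : unitInterval → M // Continuous[inferInstance, t] g},
    TopologicalSpace.coinduced f.1 inferInstance

/-- A space is Δ-generated when its topology coincides with its Δ-kelleyfication. -/
def IsDeltaGenerated (M : Type*) (t : TopologicalSpace M) : Prop :=
  t = deltaK M t

open Set

lemma deltaK_le (M : Type*) (t : TopologicalSpace M) : deltaK M t ≤ t :=
  iSup_le fun f => continuous_iff_coinduced_le.mp f.2

lemma isOpen_deltaK_iff {M : Type*} {t : TopologicalSpace M} {u : Set M} :
    IsOpen[deltaK M t] u ↔
      ∀ p : unitInterval → M, Continuous[inferInstance, t] p → IsOpen (p ⁻¹' u) := by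
  rw [deltaK]
  simp_rw [isOpen_iSup_iff, isOpen_coinduced, Subtype.forall]

lemma exists_continuous_mem_eventuallyEq_id {α : Type*} [LinearOrder α] [TopologicalSpace α]
    [OrderTopology α] {a : α} {s : Set α} (hs : s ∈ 𝓝 a) :
    ∃ q : α → α, Continuous q ∧ (∀ t, q t ∈ s) ∧ q =ᶠ[𝓝 a] id := by
  obtain ⟨b, c, habc, hIcc, hsub⟩ := exists_Icc_mem_subset_of_mem_nhds hs
  refine ⟨fun t => projIcc b c (habc.1.trans habc.2) t, by fun_prop,
    fun t => hsub (projIcc _ _ _ t).2, ?_⟩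
  filter_upwards [hIcc] with t ht
  simp [projIcc_of_mem _ ht]

lemma isOpen_deltaK_image_val {B : Type*} [TopologicalSpace B] {A : Set B} (hA : IsOpen A)
    {u : Set A} (hu : IsOpen[deltaK A inferInstance] u) :
    IsOpen[deltaK B inferInstance] (Subtype.val '' u) := by
  rw [isOpen_deltaK_iff]
  intro p hp
  rw [isOpen_iff_mem_nhds]
  rintro x ⟨y, hyu, hyx⟩
  obtain ⟨q, hq, hqA, hq_id⟩ :=
    exists_continuous_mem_eventuallyEq_id ((hA.preimage hp).mem_nhds (hyx ▸ y.2))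
  let g : unitInterval → A := fun t => ⟨p (q t), hqA t⟩
  have hg : Continuous g := (hp.comp hq).subtype_mk _
  have hgx : g x = y := Subtype.ext (by simp [g, hq_id.eq_of_nhds, hyx])
  filter_upwards [(isOpen_deltaK_iff.mp hu g hg).mem_nhds (by simpa [hgx]), hq_id]
    with t hgt hqt
  exact ⟨g t, hgt, by simp [g, hqt]⟩

lemma IsOpen.isDeltaGenerated {B : Type*} [tB : TopologicalSpace B]
    (hB : IsDeltaGenerated B tB) {A : Set B} (hA : IsOpen A) :
    IsDeltaGenerated A instTopologicalSpaceSubtype := by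
  refine le_antisymm (fun u hu => ?_) (deltaK_le _ _)
  have himage : IsOpen[tB] (Subtype.val '' u) := by
    rw [hB]
    exact isOpen_deltaK_image_val hA hu
  rw [← preimage_image_eq u Subtype.val_injective]
  exact himage.preimage continuous_subtype_val

/-- An open subset `A` of a Δ-generated space `B`, with the subspace topology, is Δ-generated,
and the inclusion `A ⊆ B` is a Δ-inclusion: for every Δ-generated `Z`, a map `Z → A` is
continuous iff its composite with the inclusion is continuous. -/
theorem stmt7 {B : Type*} [tB : TopologicalSpace B] (hB : IsDeltaGenerated B tB)
    (A : Set B) (hA : IsOpen A) :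
    IsDeltaGenerated A (instTopologicalSpaceSubtype) ∧
      ∀ (Z : Type u) (tZ : TopologicalSpace Z), IsDeltaGenerated Z tZ →
        ∀ g : Z → A,
          Continuous[tZ, instTopologicalSpaceSubtype] g ↔
            Continuous[tZ, tB] (fun z => ((g z : B))) :=
  ⟨hA.isDeltaGenerated hB, fun _ _ _ _ => IsEmbedding.subtypeVal.continuous_iff⟩
end

section
/- The inclusion of the subspace {1/n : n ≥ 1} ∪ {0} of [0,1], where the domain is given the discrete topology, is a Δ-inclusion with closed image, but it is not an embedding (the subspace topology on the image is not discrete). -/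
open Filter Topology TopologicalSpace

lemma stmt10_aux (S : Set ℝ)
    (hS : S = {x : ℝ | ∃ n : ℕ, 1 ≤ n ∧ x = 1 / (n : ℝ)} ∪ {0}) :
    S = insert (0 : ℝ) (Set.range fun n : ℕ => 1 / ((n : ℝ) + 1)) := by
  ext x
  simp only [hS, Set.mem_union, Set.mem_setOf_eq, Set.mem_singleton_iff, Set.mem_insert_iff,
    Set.mem_range]
  constructor
  · rintro (⟨n, hn, rfl⟩ | rfl)
    · right
      obtain ⟨m, rfl⟩ := Nat.exists_eq_add_of_le hn
      exact ⟨m, by push_cast; ring_nf⟩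
    · left; rfl
  · rintro (rfl | ⟨n, rfl⟩)
    · right; rfl
    · left; exact ⟨n + 1, by omega, by push_cast; ring⟩

lemma stmt10_not_irrational (S : Set ℝ)
    (hS : S = {x : ℝ | ∃ n : ℕ, 1 ≤ n ∧ x = 1 / (n : ℝ)} ∪ {0}) {x : ℝ} (hx : x ∈ S) :
    ¬ Irrational x := by
  rw [hS] at hx
  rcases hx with ⟨n, _, rfl⟩ | rfl
  · have : (1 / (n : ℝ)) = ((1 / (n : ℚ) : ℚ) : ℝ) := by push_cast; ring
    rw [this]; exact Rat.not_irrational _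
  · have : (0 : ℝ) = ((0 : ℚ) : ℝ) := by norm_num
    rw [this]; exact Rat.not_irrational _

/-- The inclusion of `{1/n : n ≥ 1}` with the discrete topology into `ℝ` is continuous,
is a Δ-inclusion (a map `[0,1] → S` is continuous iff its composite with the inclusion is),
has closed image, but is not an embedding. -/
theorem stmt10 (S : Set ℝ)
    (hS : S = {x : ℝ | ∃ n : ℕ, 1 ≤ n ∧ x = 1 / (n : ℝ)} ∪ {0}) :
    Continuous[⊥, inferInstance] (Subtype.val : S → ℝ) ∧
      (∀ g : unitInterval → S,
        Continuous[inferInstance, ⊥] g ↔ Continuous (fun t => ((g t : ℝ)))) ∧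
      IsClosed S ∧
      ¬ @IsEmbedding S ℝ ⊥ inferInstance (Subtype.val : S → ℝ) := by
  have h0 : (0 : ℝ) ∈ S := by rw [hS]; right; rfl
  refine ⟨continuous_bot, ?_, ?_, ?_⟩
  · intro g
    constructor
    · intro hg
      have hval : Continuous[⊥, inferInstance] (Subtype.val : S → ℝ) := continuous_bot
      exact @Continuous.comp unitInterval S ℝ inferInstance ⊥ inferInstance _ _ hval hg
    · intro hc
      -- the composite is constant, hence g is constant
      have hconst : ∀ t, g t = g 0 := by
        intro t
        by_contra hne
        have hne' : ((g t : ℝ)) ≠ ((g 0 : ℝ)) := fun h => hne (Subtype.ext h)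
        have key : ∀ a b : unitInterval, ((g a : ℝ)) < ((g b : ℝ)) → False := by
          intro a b hab
          obtain ⟨r, hr, hr1, hr2⟩ := exists_irrational_btwn hab
          have : r ∈ Set.range fun t => ((g t : ℝ)) :=
            intermediate_value_univ a b hc ⟨le_of_lt hr1, le_of_lt hr2⟩
          obtain ⟨t', ht'⟩ := this
          exact stmt10_not_irrational S hS (ht' ▸ (g t').2) hr
        rcases lt_or_gt_of_ne hne' with h | h
        · exact key t 0 h
        · exact key 0 t h
      have : g = fun _ => g 0 := funext hconst
      rw [this]
      exact @continuous_const unitInterval S inferInstance ⊥ (g 0)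
  · rw [stmt10_aux S hS]
    exact tendsto_one_div_add_atTop_nhds_zero_nat.isCompact_insert_range.isClosed
  · intro hemb
    have heq : (⊥ : TopologicalSpace S) = TopologicalSpace.induced Subtype.val inferInstance :=
      @IsInducing.eq_induced S ℝ ⊥ inferInstance _ (@IsEmbedding.toIsInducing S ℝ ⊥ inferInstance _ hemb)
    have hopen : IsOpen[⊥] ({(⟨0, h0⟩ : S)} : Set S) := trivial
    rw [heq, isOpen_induced_iff] at hopen
    obtain ⟨U, hU, hUeq⟩ := hopen
    have h0U : (0 : ℝ) ∈ U := by
      have : (⟨0, h0⟩ : S) ∈ Subtype.val ⁻¹' U := by rw [hUeq]; rfl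
      exact this
    obtain ⟨ε, hε, hball⟩ := Metric.isOpen_iff.mp hU 0 h0U
    obtain ⟨n, hn⟩ := exists_nat_one_div_lt hε
    set x : ℝ := 1 / ((n : ℝ) + 1) with hx
    have hxpos : 0 < x := by positivity
    have hxS : x ∈ S := by
      rw [hS]; left; exact ⟨n + 1, by omega, by push_cast; ring⟩
    have hxU : x ∈ U := by
      apply hball
      simp only [Metric.mem_ball, Real.dist_eq, sub_zero]
      rw [abs_of_pos hxpos]
      exact hn
    have : (⟨x, hxS⟩ : S) ∈ ({(⟨0, h0⟩ : S)} : Set S) := by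
      rw [← hUeq]; exact hxU
    have : x = 0 := congrArg Subtype.val (Set.mem_singleton_iff.mp this)
    exact absurd this (ne_of_gt hxpos)
end
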